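/- Let X = V/Λ be an abelian surface with Λ = ⟨λ₁, λ₂⟩ ⊕ ⟨μ₁, μ₂⟩ a symplectic basis for a polarization L of type (1,d), so that Im H is given by the matrix [[0, D],[−D, 0]] with D = diag(1,d), and let π : V → X be the projection. (i) If G is the cyclic subgroup generated by π(λ₂/d), then L itself descends under q : X → X/G (so the minimal n with nL = q*M is n = 1). (ii) If k > 1 and G is the subgroup generated by π(λ₁/k) and π(μ₁/k), then the minimal positive integer n with nL = q*M for some line bundle M on X/G is n = k² = exp(G)². -/

import Mathlib

/-!
Formalization conventions (Appell–Humbert framework).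

An abelian surface is `X = V/Λ` with `V` a 2-dimensional complex vector space
and `Λ ⊆ V` a lattice (a subgroup with a ℤ-basis of 4 elements).  By the
Appell–Humbert theorem, a line bundle on `X` is given by data `L(H, χ)`:
a Hermitian form `H` on `V` whose imaginary part is integer-valued on
`Λ × Λ`, and a semicharacter `χ : Λ → U(1)` for `H`.  For `Λ ≤ Λ'` with
`Λ'/Λ` finite, `Y = V/Λ'` is the quotient abelian surface `X/G`
(`G = Λ'/Λ = π⁻¹`-image), `q : X → Y` the quotient map, and the pullback of
`L(H', χ')` along `q` is `L(H', χ'|_Λ)`.  Thus "`L(H, χ) = q*M` for some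
`M ∈ Pic(Y)`" is: there is Appell–Humbert data on `Λ'` whose Hermitian form is
`H` and whose semicharacter restricts to `χ` on `Λ`.
-/

/-- Appell–Humbert data `L(H, χ)` for the lattice `Λ ⊆ V`: a Hermitian form
`H` on `V` (conjugate-linear in the first variable, ℂ-linear in the second)
with `Im H` integer-valued on `Λ × Λ`, together with a semicharacter `χ`. -/
structure AppellHumbertData (V : Type) [AddCommGroup V] [Module ℂ V]
    (Λ : AddSubgroup V) where
  /-- the Hermitian form -/
  H : V → V → ℂ
  add_left : ∀ x y z : V, H (x + y) z = H x z + H y z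
  smul_right : ∀ (c : ℂ) (x y : V), H x (c • y) = c * H x y
  conj_symm : ∀ x y : V, H y x = starRingEnd ℂ (H x y)
  /-- `Im H` takes integer values on `Λ × Λ` -/
  integral : ∀ l m : Λ, ∃ z : ℤ, (H (l : V) (m : V)).im = (z : ℝ)
  /-- the semicharacter -/
  χ : Λ → ℂ
  χ_norm : ∀ l : Λ, ‖χ l‖ = 1
  χ_mul : ∀ l m : Λ, χ (l + m) =
    χ l * χ m * Complex.exp (Real.pi * Complex.I * ((H (l : V) (m : V)).im : ℂ))

/-- The Appell–Humbert data `D` is of type `(1,d)` with respect to the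
symplectic ℤ-basis `b = (λ₁, λ₂, μ₁, μ₂)` of `Λ`: the alternating form
`E = Im H` has matrix `[[0, diag(1,d)], [−diag(1,d), 0]]` in this basis. -/
def AppellHumbertData.IsTypeOneD {V : Type} [AddCommGroup V] [Module ℂ V]
    {Λ : AddSubgroup V} (D : AppellHumbertData V Λ) (d : ℕ)
    (b : Module.Basis (Fin 4) ℤ Λ) : Prop :=
  (D.H ((b 0 : Λ) : V) ((b 2 : Λ) : V)).im = 1 ∧
  (D.H ((b 1 : Λ) : V) ((b 3 : Λ) : V)).im = (d : ℝ) ∧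
  (D.H ((b 0 : Λ) : V) ((b 1 : Λ) : V)).im = 0 ∧
  (D.H ((b 0 : Λ) : V) ((b 3 : Λ) : V)).im = 0 ∧
  (D.H ((b 1 : Λ) : V) ((b 2 : Λ) : V)).im = 0 ∧
  (D.H ((b 2 : Λ) : V) ((b 3 : Λ) : V)).im = 0

/-!
Put `Λ'` in a basis `b'` with `b i = t i • b' i`. Then `n • L` descends as soon as `n E` is
integral on the basis `b'`: writing `n E = B - Bᵀ` with `B` the strictly upper triangular part
of its Gram matrix, `x ↦ (∏ sᵢ ^ xᵢ) exp (π i B(x, x))` is a semicharacter of `n E` on `Λ'` for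
any unit `sᵢ`; choosing `sᵢ` a `t i`-th root of `χ(b i) ^ n` makes it restrict to `χ ^ n`,
because two semicharacters of the same form that agree on a basis agree everywhere.
In (i) `E` is already integral on `Λ'`. In (ii) `E(λ₁/k, μ₁/k) = 1/k²` forces `k² ∣ n`, while
`k² E` is integral; and `Λ'/Λ ≅ ⊕ ℤ/tᵢ` has exponent `lcm tᵢ = k`.
-/

open Set Complex

section Lattice

variable {ι M : Type*} [AddCommGroup M]

theorem LinearIndependent.of_smul_of_ne_zero [Fintype ι] {R : Type*} [CommRing R] [IsDomain R]
    [Module R M] {w : ι → M} {c : ι → R} (hc : ∀ i, c i ≠ 0)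
    (hcw : LinearIndependent R fun i => c i • w i) : LinearIndependent R w := by
  classical
  rw [Fintype.linearIndependent_iff] at hcw ⊢
  intro g hg i
  have hsum : ∑ j, (g j * ∏ k ∈ Finset.univ.erase j, c k) • c j • w j = 0 := by
    calc ∑ j, (g j * ∏ k ∈ Finset.univ.erase j, c k) • c j • w j
        = ∑ j, (∏ k, c k) • g j • w j := by
          refine Finset.sum_congr rfl fun j _ => ?_
          rw [smul_smul, smul_smul, ← Finset.prod_erase_mul _ _ (Finset.mem_univ j)]
          ring_nf
      _ = 0 := by rw [← Finset.smul_sum, hg, smul_zero]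
  exact (mul_eq_zero.mp (hcw _ hsum i)).resolve_right
    (Finset.prod_ne_zero_iff.mpr fun k _ => hc k)

theorem Module.Basis.eq_one_of_map_add {G₀ : Type*} [GroupWithZero G₀]
    (b : Module.Basis ι ℤ M) {f : M → G₀} (hf : ∀ x y, f (x + y) = f x * f y) (h0 : f 0 ≠ 0)
    (hb : ∀ i, f (b i) = 1) (x : M) : f x = 1 := by
  have hf0 : f 0 = 1 := (mul_eq_left₀ h0).mp (by rw [← hf, add_zero])
  let S : AddSubgroup M :=
    { carrier := {x | f x = 1}
      add_mem' := fun {x y} (hx : f x = 1) (hy : f y = 1) => by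
        simp only [Set.mem_ofPred_eq, hf, hx, hy, one_mul]
      zero_mem' := hf0
      neg_mem' := fun {x} (hx : f x = 1) => by
        have := hf x (-x)
        rwa [add_neg_cancel, hf0, hx, one_mul, eq_comm] at this }
  have : (⊤ : Submodule ℤ M) ≤ S.toIntSubmodule :=
    b.span_eq ▸ Submodule.span_le.mpr (range_subset_iff.mpr hb)
  exact this trivial

variable [Fintype ι]

theorem Module.Basis.addSubgroup_le {Λ Λ' : AddSubgroup M} (b : Module.Basis ι ℤ Λ)
    (h : ∀ i, (b i : M) ∈ Λ') : Λ ≤ Λ' := by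
  intro x hx
  rw [show x = ((⟨x, hx⟩ : Λ) : M) from rfl, ← b.sum_repr ⟨x, hx⟩, AddSubgroup.val_finsetSum]
  exact sum_mem fun i _ => zsmul_mem (h i) _

theorem AddSubgroup.exists_basis_of_eq_closure {L : AddSubgroup M}
    {w : ι → M} (hw : LinearIndependent ℤ w) (hL : L = closure (range w)) :
    ∃ b : Module.Basis ι ℤ L, ∀ i, (b i : M) = w i := by
  have hwL : ∀ i, w i ∈ L := fun i => hL ▸ subset_closure (mem_range_self i)
  refine ⟨.mk (v := fun i => ⟨w i, hwL i⟩) (.of_comp L.subtype.toIntLinearMap hw) ?_,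
    fun i => by rw [Module.Basis.mk_apply]⟩
  rintro ⟨x, hx⟩ -
  rw [hL, ← Submodule.span_int_eq_addSubgroupClosure, Submodule.mem_toAddSubgroup,
    Submodule.mem_span_range_iff_exists_fun] at hx
  obtain ⟨c, rfl⟩ := hx
  rw [Submodule.mem_span_range_iff_exists_fun]
  exact ⟨c, Subtype.ext (by simp)⟩

theorem AddSubgroup.sup_closure_image_eq_closure_range
    {Λ : AddSubgroup M} (b : Module.Basis ι ℤ Λ) {w : ι → M} {t : ι → ℕ}
    (hbw : ∀ i, (b i : M) = t i • w i) {S : Set ι} (hS : ∀ i ∉ S, t i = 1) :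
    Λ ⊔ closure (w '' S) = closure (range w) := by
  apply le_antisymm
  · refine sup_le (b.addSubgroup_le fun i => ?_) (closure_mono (image_subset_range w S))
    rw [hbw]
    exact nsmul_mem (subset_closure (mem_range_self i)) _
  · rw [closure_le]
    rintro _ ⟨i, rfl⟩
    by_cases hi : i ∈ S
    · exact mem_sup_right (subset_closure (mem_image_of_mem w hi))
    · have := (b i).2
      rw [hbw, hS i hi, one_smul] at this
      exact mem_sup_left this

section Index

variable {Λ Λ' : AddSubgroup M} (b : Module.Basis ι ℤ Λ) (b' : Module.Basis ι ℤ Λ')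
  {t : ι → ℕ} (hbb' : ∀ i, (b i : M) = t i • (b' i : M))
include hbb'

theorem Module.Basis.repr_eq_mul_repr_of_eq_nsmul {x : Λ'} {l : Λ} (hx : (x : M) = l) (i : ι) :
    b'.repr x i = t i * b.repr l i := by
  have : x = ∑ j, (b.repr l j * t j) • b' j := by
    refine Subtype.ext ?_
    rw [hx, AddSubgroup.val_finsetSum]
    conv_lhs => rw [← b.sum_repr l]
    rw [AddSubgroup.val_finsetSum]
    refine Finset.sum_congr rfl fun j _ => ?_
    rw [AddSubgroup.coe_zsmul, AddSubgroup.coe_zsmul, hbb', mul_smul, natCast_zsmul]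
  rw [this, b'.repr_sum_self, mul_comm]

theorem addOrderOf_mk_of_eq_nsmul (i : ι) :
    addOrderOf (QuotientAddGroup.mk (b' i) : Λ' ⧸ Λ.addSubgroupOf Λ') = t i := by
  refine Nat.dvd_antisymm ?_ ?_
  · refine addOrderOf_dvd_of_nsmul_eq_zero ?_
    rw [← QuotientAddGroup.mk_nsmul, QuotientAddGroup.eq_zero_iff, AddSubgroup.mem_addSubgroupOf,
      AddSubgroup.coe_nsmul, ← hbb']
    exact (b i).2
  · have h := addOrderOf_nsmul_eq_zero (QuotientAddGroup.mk (b' i) : Λ' ⧸ Λ.addSubgroupOf Λ')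
    rw [← QuotientAddGroup.mk_nsmul, QuotientAddGroup.eq_zero_iff,
      AddSubgroup.mem_addSubgroupOf] at h
    have hrepr :=
      b.repr_eq_mul_repr_of_eq_nsmul b' hbb' (x := addOrderOf _ • b' i) (l := ⟨_, h⟩) rfl i
    simp only [map_nsmul, Finsupp.smul_apply, b'.repr_self, Finsupp.single_eq_same,
      nsmul_eq_mul, mul_one] at hrepr
    exact Int.natCast_dvd_natCast.mp ⟨_, hrepr⟩

theorem exponent_quotient_of_eq_nsmul :
    AddMonoid.exponent (Λ' ⧸ Λ.addSubgroupOf Λ') = Finset.univ.lcm t := by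
  refine Nat.dvd_antisymm (AddMonoid.exponent_dvd_of_forall_nsmul_eq_zero fun y => ?_)
    (Finset.lcm_dvd fun i _ => addOrderOf_mk_of_eq_nsmul b b' hbb' i ▸
      AddMonoid.addOrder_dvd_exponent _)
  have : Finset.univ.lcm t • (QuotientAddGroup.mk' (Λ.addSubgroupOf Λ')).toIntLinearMap = 0 :=
    b'.ext fun i => by
      simp only [LinearMap.smul_apply, AddMonoidHom.coe_toIntLinearMap,
        QuotientAddGroup.mk'_apply, LinearMap.zero_apply]
      rw [← addOrderOf_dvd_iff_nsmul_eq_zero, addOrderOf_mk_of_eq_nsmul b b' hbb']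
      exact Finset.dvd_lcm (Finset.mem_univ i)
  induction y using QuotientAddGroup.induction_on with
  | H x => exact LinearMap.congr_fun this x

end Index

end Lattice

variable {ι : Type*} {V : Type} [AddCommGroup V] [Module ℂ V]

theorem exists_basis_nsmul_eq_of_eq_sup_closure [Fintype ι] {Λ Λ' : AddSubgroup V}
    (b : Module.Basis ι ℤ Λ) {t : ι → ℕ} (ht : ∀ i, t i ≠ 0) {S : Set ι}
    (hS : ∀ i ∉ S, t i = 1)
    (hΛ' : Λ' = Λ ⊔ AddSubgroup.closure ((fun i => (t i : ℂ)⁻¹ • (b i : V)) '' S)) :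
    ∃ b' : Module.Basis ι ℤ Λ', ∀ i, (b i : V) = t i • (b' i : V) := by
  set w : ι → V := fun i => (t i : ℂ)⁻¹ • (b i : V)
  have hbw : ∀ i, (b i : V) = t i • w i := fun i => by
    rw [← Nat.cast_smul_eq_nsmul ℂ, smul_inv_smul₀ (Nat.cast_ne_zero.mpr (ht i))]
  have hb : LinearIndependent ℤ fun i => (b i : V) :=
    b.linearIndependent.map' Λ.subtype.toIntLinearMap
      (LinearMap.ker_eq_bot.mpr Subtype.val_injective)
  have hw : LinearIndependent ℤ w := .of_smul_of_ne_zero (c := fun i => (t i : ℤ))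
    (fun i => Int.natCast_ne_zero.mpr (ht i)) (by simpa only [natCast_zsmul, ← hbw] using hb)
  obtain ⟨b', hb'⟩ := AddSubgroup.exists_basis_of_eq_closure hw
    (hΛ'.trans (AddSubgroup.sup_closure_image_eq_closure_range b hbw hS))
  exact ⟨b', fun i => by rw [hb', hbw]⟩

theorem exists_norm_eq_one_pow_eq {z : ℂ} (hz : ‖z‖ = 1) {t : ℕ} (ht : t ≠ 0) :
    ∃ s : ℂ, ‖s‖ = 1 ∧ s ^ t = z := by
  obtain ⟨s, hs⟩ := IsAlgClosed.exists_pow_nat_eq z (Nat.pos_of_ne_zero ht)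
  refine ⟨s, (pow_eq_one_iff_of_nonneg (norm_nonneg s) ht).mp ?_, hs⟩
  rw [← norm_pow, hs, hz]

namespace AppellHumbertData

variable {Λ : AddSubgroup V} (D : AppellHumbertData V Λ)

theorem H_add_right (x y z : V) : D.H x (y + z) = D.H x y + D.H x z := by
  rw [D.conj_symm, D.add_left, map_add, ← D.conj_symm, ← D.conj_symm]

theorem H_smul_left (c : ℂ) (x y : V) : D.H (c • x) y = starRingEnd ℂ c * D.H x y := by
  rw [D.conj_symm, D.smul_right, map_mul, ← D.conj_symm]

theorem H_zsmul_left (n : ℤ) (x y : V) : D.H (n • x) y = n * D.H x y := by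
  rw [← Int.cast_smul_eq_zsmul ℂ, H_smul_left, map_intCast]

theorem H_zsmul_right (n : ℤ) (x y : V) : D.H x (n • y) = n * D.H x y := by
  rw [← Int.cast_smul_eq_zsmul ℂ, D.smul_right]

theorem im_H_swap (x y : V) : (D.H y x).im = -(D.H x y).im := by
  rw [D.conj_symm, conj_im]

theorem im_H_self (x : V) : (D.H x x).im = 0 := by
  linarith [D.im_H_swap x x]

theorem im_H_nsmul_nsmul (p q : ℕ) (x y : V) :
    (D.H (p • x) (q • y)).im = p * q * (D.H x y).im := by
  rw [← natCast_zsmul, ← natCast_zsmul, H_zsmul_left, H_zsmul_right, ← mul_assoc]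
  simp

def imForm (L : AddSubgroup V) : L →ₗ[ℤ] L →ₗ[ℤ] ℝ :=
  LinearMap.mk₂ ℤ (fun x y => (D.H x y).im)
    (fun x x' y => by simp [D.add_left])
    (fun n x y => by simp [D.H_zsmul_left])
    (fun x y y' => by simp [D.H_add_right])
    (fun n x y => by simp [D.H_zsmul_right])

@[simp]
theorem imForm_apply (L : AddSubgroup V) (x y : L) : D.imForm L x y = (D.H x y).im := rfl

theorem χ_ne_zero (l : Λ) : D.χ l ≠ 0 := fun h => by simpa [h] using D.χ_norm l

theorem χ_zero : D.χ 0 = 1 := by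
  have h := D.χ_mul 0 0
  rw [add_zero, ZeroMemClass.coe_zero, im_H_self, ofReal_zero, mul_zero, exp_zero,
    mul_one] at h
  exact (mul_eq_left₀ (D.χ_ne_zero 0)).mp h.symm

theorem χ_nsmul (l : Λ) (n : ℕ) : D.χ (n • l) = D.χ l ^ n := by
  induction n with
  | zero => rw [zero_nsmul, χ_zero, pow_zero]
  | succ n ih =>
    rw [succ_nsmul, D.χ_mul, ih, AddSubgroup.coe_nsmul, ← natCast_zsmul, H_zsmul_left]
    simp [im_H_self, pow_succ]

theorem exists_mul_im_H_eq_sub_flip [Fintype ι] [LinearOrder ι] {Λ' : AddSubgroup V}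
    (b' : Module.Basis ι ℤ Λ') {n : ℕ} (hint : ∀ i j, ∃ z : ℤ, n * (D.H (b' i) (b' j)).im = z) :
    ∃ B : Λ' →ₗ[ℤ] Λ' →ₗ[ℤ] ℤ, (∀ i, B (b' i) (b' i) = 0) ∧
      ∀ x y : Λ', n * (D.H x y).im = ((B x y - B y x : ℤ) : ℝ) := by
  choose e he using hint
  set B : Λ' →ₗ[ℤ] Λ' →ₗ[ℤ] ℤ := Matrix.toLinearMap₂ b' b' fun i j => if i < j then e i j else 0
  have hBb : ∀ i j, B (b' i) (b' j) = if i < j then e i j else 0 := fun i j =>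
    Matrix.toLinearMap₂_apply_basis ..
  have : n • D.imForm Λ' = (B - B.flip).compr₂ (Int.castAddHom ℝ).toIntLinearMap := by
    refine LinearMap.ext_basis b' b' fun i j => ?_
    simp only [LinearMap.smul_apply, imForm_apply, LinearMap.compr₂_apply,
      LinearMap.sub_apply, LinearMap.flip_apply, hBb, nsmul_eq_mul]
    rcases lt_trichotomy i j with hij | rfl | hij
    · simp [hij, hij.not_gt, he]
    · simp [im_H_self]
    · have := he j i
      rw [D.im_H_swap] at this
      simp [hij, hij.not_gt, ← this]
  exact ⟨B, fun i => by simp [hBb], fun x y => by simpa using LinearMap.congr_fun₂ this x y⟩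

theorem exists_of_basis [Fintype ι] [LinearOrder ι] {Λ' : AddSubgroup V}
    (b' : Module.Basis ι ℤ Λ') (n : ℕ) (hint : ∀ i j, ∃ z : ℤ, n * (D.H (b' i) (b' j)).im = z)
    (s : ι → ℂ) (hs : ∀ i, ‖s i‖ = 1) :
    ∃ D' : AppellHumbertData V Λ', (∀ x y, D'.H x y = n * D.H x y) ∧ ∀ i, D'.χ (b' i) = s i := by
  obtain ⟨B, hBb, hB⟩ := D.exists_mul_im_H_eq_sub_flip b' hint
  have hs0 : ∀ i, s i ≠ 0 := fun i h => by simpa [h] using hs i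
  refine ⟨{ H := fun x y => n * D.H x y
            add_left := fun x y z => by rw [D.add_left, mul_add]
            smul_right := fun c x y => by rw [D.smul_right, mul_left_comm]
            conj_symm := fun x y => by rw [map_mul, map_natCast, ← D.conj_symm]
            integral := fun l m => ⟨B l m - B m l, by simpa using hB l m⟩
            χ := fun x => (∏ i, s i ^ b'.repr x i) * exp (Real.pi * I * B x x)
            χ_norm := fun x => by simp [norm_exp, hs]
            χ_mul := fun l m => ?_ }, fun _ _ => rfl, fun i => by simp [hBb, Finsupp.single_apply]⟩
  have hprod : ∏ i, s i ^ b'.repr (l + m) i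
      = (∏ i, s i ^ b'.repr l i) * ∏ i, s i ^ b'.repr m i := by
    simp only [map_add, Finsupp.add_apply, zpow_add₀ (hs0 _), Finset.prod_mul_distrib]
  have hexp : exp (Real.pi * I * B (l + m) (l + m)) = exp (Real.pi * I * B l l)
      * exp (Real.pi * I * B m m) * exp (Real.pi * I * ((n * D.H l m).im : ℝ)) := by
    calc exp (Real.pi * I * B (l + m) (l + m))
        = exp (Real.pi * I * B l l + Real.pi * I * B m m
            + Real.pi * I * ((B l m - B m l : ℤ) : ℝ) + B m l * (2 * Real.pi * I)) := by
          congr 1; simp only [map_add, LinearMap.add_apply]; push_cast; ring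
      _ = _ := by
        rw [exp_add, exp_add, exp_add, exp_int_mul_two_pi_mul_I, mul_one, ← hB]; simp
  simp only [hprod, hexp]
  ring

theorem χ_restrict_eq_pow_of_basis {Λ' : AddSubgroup V} (hle : Λ ≤ Λ')
    (D' : AppellHumbertData V Λ') {n : ℕ} (hH : ∀ x y, D'.H x y = n * D.H x y)
    (b : Module.Basis ι ℤ Λ) (hb : ∀ i, D'.χ ⟨b i, hle (b i).2⟩ = D.χ (b i) ^ n) (l : Λ) :
    D'.χ ⟨l, hle l.2⟩ = D.χ l ^ n := by
  -- the quotient of two semicharacters for the same form is a character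
  have hchar : ∀ l m : Λ, D'.χ ⟨↑(l + m), hle (l + m).2⟩ / D.χ (l + m) ^ n
      = D'.χ ⟨l, hle l.2⟩ / D.χ l ^ n * (D'.χ ⟨m, hle m.2⟩ / D.χ m ^ n) := fun l m => by
    have hsum : (⟨↑(l + m), hle (l + m).2⟩ : Λ') = ⟨l, hle l.2⟩ + ⟨m, hle m.2⟩ := rfl
    rw [hsum, D'.χ_mul, D.χ_mul, hH, mul_pow, mul_pow, ← exp_nat_mul]
    have := D.χ_ne_zero l
    have := D.χ_ne_zero m
    simp only [mul_im, natCast_re, natCast_im, zero_mul, add_zero, ofReal_mul, ofReal_natCast]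
    field_simp
  have := Module.Basis.eq_one_of_map_add b (f := fun l : Λ => D'.χ ⟨l, hle l.2⟩ / D.χ l ^ n)
    hchar (by simp [χ_zero, D'.χ_ne_zero])
    (fun i => by rw [hb, div_self (pow_ne_zero _ (D.χ_ne_zero _))]) l
  exact (div_eq_one_iff_eq (pow_ne_zero _ (D.χ_ne_zero l))).mp this

theorem exists_descent [Fintype ι] [LinearOrder ι] {Λ' : AddSubgroup V} (hle : Λ ≤ Λ')
    (b : Module.Basis ι ℤ Λ) (b' : Module.Basis ι ℤ Λ') {t : ι → ℕ} (ht : ∀ i, t i ≠ 0)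
    (hbb' : ∀ i, (b i : V) = t i • (b' i : V)) (n : ℕ)
    (hint : ∀ i j, ∃ z : ℤ, n * (D.H (b' i) (b' j)).im = z) :
    ∃ D' : AppellHumbertData V Λ', (∀ x y, D'.H x y = n * D.H x y) ∧
      ∀ l : Λ, D'.χ ⟨l, hle l.2⟩ = D.χ l ^ n := by
  choose s hs hst using fun i =>
    exists_norm_eq_one_pow_eq (by rw [norm_pow, D.χ_norm, one_pow]) (ht i)
  obtain ⟨D', hH, hχ⟩ := D.exists_of_basis b' n hint s hs
  refine ⟨D', hH, D.χ_restrict_eq_pow_of_basis hle D' hH b fun i => ?_⟩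
  rw [show (⟨b i, hle (b i).2⟩ : Λ') = t i • b' i from Subtype.ext (hbb' i), D'.χ_nsmul, hχ,
    hst]

theorem exists_int_mul_im_H_of_dvd {Λ' : AddSubgroup V} (b : Module.Basis ι ℤ Λ)
    (b' : Module.Basis ι ℤ Λ') {t : ι → ℕ} (ht : ∀ i, t i ≠ 0)
    (hbb' : ∀ i, (b i : V) = t i • (b' i : V)) {A : ι → ι → ℤ}
    (hA : ∀ i j, (D.H (b i) (b j)).im = A i j) {n : ℕ}
    (hdvd : ∀ i j, ((t i * t j : ℕ) : ℤ) ∣ n * A i j) (i j : ι) :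
    ∃ z : ℤ, n * (D.H (b' i) (b' j)).im = z := by
  obtain ⟨z, hz⟩ := hdvd i j
  have htt : ((t i * t j : ℕ) : ℝ) ≠ 0 := by simp [ht]
  refine ⟨z, mul_left_cancel₀ htt ?_⟩
  have := hA i j
  rw [hbb', hbb', im_H_nsmul_nsmul] at this
  calc ((t i * t j : ℕ) : ℝ) * (n * (D.H (b' i) (b' j)).im)
      = n * (t i * t j * (D.H (b' i) (b' j)).im) := by push_cast; ring
    _ = ((t i * t j : ℕ) : ℝ) * z := by rw [this]; exact_mod_cast hz

theorem dvd_of_descends {Λ' : AddSubgroup V} (D' : AppellHumbertData V Λ') {m : ℕ}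
    (hH : ∀ x y, D'.H x y = m * D.H x y) {x y : Λ'} {a : ℕ} (hxy : a * (D.H x y).im = 1) :
    a ∣ m := by
  obtain ⟨z, hz⟩ := D'.integral x y
  have hmz : (m : ℝ) = a * z := by
    rw [hH] at hz
    simp only [mul_im, natCast_re, natCast_im, zero_mul, add_zero] at hz
    rw [← hz]
    linear_combination -(m : ℝ) * hxy
  exact Int.natCast_dvd_natCast.mp ⟨z, by exact_mod_cast hmz⟩

def typeOneDMatrix (d : ℕ) : Matrix (Fin 4) (Fin 4) ℤ :=
  !![0, 0, 1, 0; 0, 0, 0, d; -1, 0, 0, 0; 0, -d, 0, 0]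

theorem IsTypeOneD.im_H_eq {d : ℕ} {b : Module.Basis (Fin 4) ℤ Λ} (hD : D.IsTypeOneD d b)
    (i j : Fin 4) : (D.H (b i) (b j)).im = typeOneDMatrix d i j := by
  obtain ⟨h02, h13, h01, h03, h12, h23⟩ := hD
  fin_cases i <;> fin_cases j <;>
    simp [typeOneDMatrix, im_H_self, h02, h13, h01, h03, h12, h23] <;>
    rw [im_H_swap] <;> simp [h02, h13, h01, h03, h12, h23]

end AppellHumbertData

theorem descent_of_polarization_examples_general
    (V : Type) [AddCommGroup V] [Module ℂ V]
    (Λ : AddSubgroup V) (b : Module.Basis (Fin 4) ℤ Λ)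
    (d : ℕ) (hd : 0 < d)
    (D : AppellHumbertData V Λ) (hD : D.IsTypeOneD d b) :
    -- (i) `G = ⟨π(λ₂/d)⟩`: `L` itself descends, i.e. the minimal `n` is `1`
    (∀ Λ' : AddSubgroup V,
      Λ' = Λ ⊔ AddSubgroup.closure {(d : ℂ)⁻¹ • ((b 1 : Λ) : V)} →
      ∀ hle : Λ ≤ Λ',
        ∃ D' : AppellHumbertData V Λ',
          (∀ x y : V, D'.H x y = D.H x y) ∧
          ∀ l : Λ, D'.χ ⟨(l : V), hle l.2⟩ = D.χ l) ∧
    -- (ii) `G = ⟨π(λ₁/k), π(μ₁/k)⟩`, `k > 1`: the minimal `n` is `k² = exp(G)²`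
    (∀ k : ℕ, 1 < k → ∀ Λ' : AddSubgroup V,
      Λ' = Λ ⊔ AddSubgroup.closure
          {(k : ℂ)⁻¹ • ((b 0 : Λ) : V), (k : ℂ)⁻¹ • ((b 2 : Λ) : V)} →
      ∀ hle : Λ ≤ Λ',
        -- `k²·L` descends …
        (∃ D' : AppellHumbertData V Λ',
          (∀ x y : V, D'.H x y = (k ^ 2 : ℂ) * D.H x y) ∧
          ∀ l : Λ, D'.χ ⟨(l : V), hle l.2⟩ = D.χ l ^ (k ^ 2)) ∧
        -- … `k²` is minimal among positive `m` such that `m·L` descends …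
        (∀ m : ℕ, 0 < m →
          (∃ D' : AppellHumbertData V Λ',
            (∀ x y : V, D'.H x y = (m : ℂ) * D.H x y) ∧
            ∀ l : Λ, D'.χ ⟨(l : V), hle l.2⟩ = D.χ l ^ m) →
          k ^ 2 ≤ m) ∧
        -- … and `k` is the exponent of `G = Λ'/Λ`
        k = AddMonoid.exponent (Λ' ⧸ Λ.addSubgroupOf Λ')) := by
  have hE := hD.im_H_eq
  refine ⟨fun Λ' hΛ' hle => ?_, fun k hk Λ' hΛ' hle => ?_⟩
  · have ht : ∀ i, ![1, d, 1, 1] i ≠ 0 := by intro i; fin_cases i <;> simp [hd.ne']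
    obtain ⟨b', hbb'⟩ := exists_basis_nsmul_eq_of_eq_sup_closure b ht (S := {1})
      (by intro i; fin_cases i <;> simp) (by simpa using hΛ')
    simpa using D.exists_descent hle b b' ht hbb' 1
      (D.exists_int_mul_im_H_of_dvd b b' ht hbb' hE fun i j => by
        fin_cases i <;> fin_cases j <;> simp [AppellHumbertData.typeOneDMatrix])
  · have ht : ∀ i, ![k, 1, k, 1] i ≠ 0 := by intro i; fin_cases i <;> simp <;> omega
    obtain ⟨b', hbb'⟩ := exists_basis_nsmul_eq_of_eq_sup_closure b ht (S := {0, 2})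
      (by intro i; fin_cases i <;> simp) (by simpa [Set.image_insert_eq] using hΛ')
    refine ⟨?_, fun m hm ⟨D', hH, _⟩ => Nat.le_of_dvd hm (D.dvd_of_descends D' hH
      (x := b' 0) (y := b' 2) ?_), ?_⟩
    · obtain ⟨D', hH, hχ⟩ := D.exists_descent hle b b' ht hbb' (k ^ 2)
        (D.exists_int_mul_im_H_of_dvd b b' ht hbb' hE fun i j => by
          fin_cases i <;> fin_cases j <;> simp [AppellHumbertData.typeOneDMatrix, sq])
      exact ⟨D', fun x y => by rw [hH, Nat.cast_pow], hχ⟩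
    · have := hE 0 2
      rw [hbb', hbb', D.im_H_nsmul_nsmul] at this
      simpa [AppellHumbertData.typeOneDMatrix, sq] using this
    · rw [exponent_quotient_of_eq_nsmul b b' hbb']
      simp [Fin.univ_succ, Finset.lcm_insert]

theorem descent_of_polarization_examples
    (V : Type) [AddCommGroup V] [Module ℂ V]
    (hV : Module.finrank ℂ V = 2)
    (Λ : AddSubgroup V) (b : Module.Basis (Fin 4) ℤ Λ)
    (d : ℕ) (hd : 0 < d)
    (D : AppellHumbertData V Λ) (hD : D.IsTypeOneD d b) :
    -- (i) `G = ⟨π(λ₂/d)⟩`: `L` itself descends, i.e. the minimal `n` is `1`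
    (∀ Λ' : AddSubgroup V,
      Λ' = Λ ⊔ AddSubgroup.closure {(d : ℂ)⁻¹ • ((b 1 : Λ) : V)} →
      ∀ hle : Λ ≤ Λ',
        ∃ D' : AppellHumbertData V Λ',
          (∀ x y : V, D'.H x y = D.H x y) ∧
          ∀ l : Λ, D'.χ ⟨(l : V), hle l.2⟩ = D.χ l) ∧
    -- (ii) `G = ⟨π(λ₁/k), π(μ₁/k)⟩`, `k > 1`: the minimal `n` is `k² = exp(G)²`
    (∀ k : ℕ, 1 < k → ∀ Λ' : AddSubgroup V,
      Λ' = Λ ⊔ AddSubgroup.closure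
          {(k : ℂ)⁻¹ • ((b 0 : Λ) : V), (k : ℂ)⁻¹ • ((b 2 : Λ) : V)} →
      ∀ hle : Λ ≤ Λ',
        -- `k²·L` descends …
        (∃ D' : AppellHumbertData V Λ',
          (∀ x y : V, D'.H x y = (k ^ 2 : ℂ) * D.H x y) ∧
          ∀ l : Λ, D'.χ ⟨(l : V), hle l.2⟩ = D.χ l ^ (k ^ 2)) ∧
        -- … `k²` is minimal among positive `m` such that `m·L` descends …
        (∀ m : ℕ, 0 < m →
          (∃ D' : AppellHumbertData V Λ',
            (∀ x y : V, D'.H x y = (m : ℂ) * D.H x y) ∧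
            ∀ l : Λ, D'.χ ⟨(l : V), hle l.2⟩ = D.χ l ^ m) →
          k ^ 2 ≤ m) ∧
        -- … and `k` is the exponent of `G = Λ'/Λ`
        k = AddMonoid.exponent (Λ' ⧸ Λ.addSubgroupOf Λ')) :=
  descent_of_polarization_examples_general V Λ b d hd D hD
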